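/- Let ε ∈ (0,1) and set α = ε·√((1−ε)²(1+ε−ε²)/(1+ε)) = ε/√f(ε). Then for all k₂ > 0, h(k₂) = k₂²/(k₂²+α²) + (α²/(k₂²+α²))·1{k₂ ≤ 2ε/(1−ε)}·((1+ε)/(1+k₂) − (1−ε))/(2ε) ≥ 3/4. -/

import Mathlib

open MeasureTheory ProbabilityTheory Real

/-- The uniform probability measure on the interval `[a, b]`. -/
noncomputable def uniformIcc (a b : ℝ) : Measure ℝ :=
  (ENNReal.ofReal (b - a))⁻¹ • (MeasureTheory.volume.restrict (Set.Icc a b))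

/-- The median of `2*n+1` real values: their `(n+1)`-st smallest value. -/
noncomputable def medianOf {n : ℕ} (v : Fin (2 * n + 1) → ℝ) : ℝ :=
  (Multiset.sort (↑(List.ofFn v)) (· ≤ ·)).get ⟨n, by simp; omega⟩

/-- The nuisance factor `f(ε) = (1+ε)/((1-ε)² (1+ε-ε²))`. -/
noncomputable def nuisance (ε : ℝ) : ℝ := (1 + ε) / ((1 - ε) ^ 2 * (1 + ε - ε ^ 2))

/-- The function `h(k₂) = k₂²/(k₂²+α²) + (α²/(k₂²+α²))·1{k₂ ≤ 2ε/(1−ε)}·((1+ε)/(1+k₂) − (1−ε))/(2ε)`. -/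
noncomputable def hFun (ε α k₂ : ℝ) : ℝ :=
  k₂ ^ 2 / (k₂ ^ 2 + α ^ 2) +
    α ^ 2 / (k₂ ^ 2 + α ^ 2) *
      (if k₂ ≤ 2 * ε / (1 - ε) then ((1 + ε) / (1 + k₂) - (1 - ε)) / (2 * ε) else 0)

/-! Writing `h = (k² + α² g) / (k² + α²)`, the bound `3/4 ≤ h` is `3α² ≤ k² + 4α² g`. Off the
indicator (`k(1-ε) > 2ε`) this is `3α² ≤ k²`; on it, it becomes the cubic inequality
`α² ((2+ε)k - ε) ≤ ε (k³ + k²)`, whose quadratic part has non-positive discriminant. Both cases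
only need `α² (2+ε)² ≤ 4ε²`, which for `α = ε/√f(ε)` is the polynomial bound `(2+ε)² ≤ 4 f(ε)`. -/

lemma three_quarters_le_div_add_div_mul_iff {x y g : ℝ} (hxy : 0 < x + y) :
    3 / 4 ≤ x / (x + y) + y / (x + y) * g ↔ 3 * y ≤ x + 4 * y * g := by
  rw [div_mul_eq_mul_div, ← add_div, le_div_iff₀ hxy]
  constructor <;> intro h <;> linarith

lemma mul_sub_le_mul_sq_of_discrim_nonpos {ε a c k : ℝ} (hε : 0 < ε) (ha : 0 ≤ a)
    (hdisc : a * c ^ 2 ≤ 4 * ε ^ 2) : a * (c * k - ε) ≤ ε * k ^ 2 := by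
  have hsq : 4 * ε * (ε * k ^ 2 - a * (c * k - ε)) =
      (2 * ε * k - a * c) ^ 2 + a * (4 * ε ^ 2 - a * c ^ 2) := by ring
  have : 0 ≤ 4 * ε * (ε * k ^ 2 - a * (c * k - ε)) := by
    rw [hsq]; exact add_nonneg (sq_nonneg _) (mul_nonneg ha (by linarith))
  linarith [nonneg_of_mul_nonneg_right this (by positivity)]

lemma two_add_sq_le_four_mul_nuisance {ε : ℝ} (h0 : 0 ≤ ε) (h1 : ε < 1) :
    (2 + ε) ^ 2 ≤ 4 * nuisance ε := by
  have hA : 0 < (1 - ε) ^ 2 * (1 + ε - ε ^ 2) := by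
    have : 0 < 1 - ε := by linarith
    have : 0 < 1 + ε - ε ^ 2 := by nlinarith
    positivity
  rw [nuisance, mul_div_assoc', le_div_iff₀ hA]
  have hpoly : 4 * (1 + ε) - (2 + ε) ^ 2 * ((1 - ε) ^ 2 * (1 + ε - ε ^ 2)) =
      ε * (4 + 11 * ε - 3 * ε ^ 2 - 6 * ε ^ 3 + ε ^ 4 + ε ^ 5) := by ring
  have hquintic : 0 ≤ 4 + 11 * ε - 3 * ε ^ 2 - 6 * ε ^ 3 + ε ^ 4 + ε ^ 5 := by
    have : ε ^ 3 ≤ ε := by nlinarith [pow_le_one₀ h0 h1.le (n := 2)]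
    nlinarith [pow_nonneg h0 4, pow_nonneg h0 5]
  nlinarith [mul_nonneg h0 hquintic]

lemma sq_eq_div_nuisance {ε α : ℝ} (hε : ε ∈ Set.Ioo (0 : ℝ) 1)
    (hα : α = ε * Real.sqrt ((1 - ε) ^ 2 * (1 + ε - ε ^ 2) / (1 + ε))) :
    α ^ 2 = ε ^ 2 / nuisance ε := by
  obtain ⟨h0, h1⟩ := hε
  have : 0 ≤ 1 + ε - ε ^ 2 := by nlinarith
  rw [hα, mul_pow, Real.sq_sqrt (by positivity), nuisance, div_div_eq_mul_div]
  ring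

lemma sq_mul_two_add_sq_le {ε α : ℝ} (hε : ε ∈ Set.Ioo (0 : ℝ) 1)
    (hα : α = ε * Real.sqrt ((1 - ε) ^ 2 * (1 + ε - ε ^ 2) / (1 + ε))) :
    α ^ 2 * (2 + ε) ^ 2 ≤ 4 * ε ^ 2 := by
  have hf := two_add_sq_le_four_mul_nuisance hε.1.le hε.2
  have hf0 : 0 < nuisance ε := by nlinarith [sq_nonneg (2 + ε), hε.1]
  rw [sq_eq_div_nuisance hε hα, div_mul_eq_mul_div, div_le_iff₀ hf0]
  nlinarith [sq_nonneg ε]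

section hFun

variable {ε α k : ℝ}

lemma three_quarters_le_hFun_of_le (hε : 0 < ε) (hk : 0 < k)
    (hα : α ^ 2 * (2 + ε) ^ 2 ≤ 4 * ε ^ 2) (hle : k ≤ 2 * ε / (1 - ε)) :
    3 / 4 ≤ hFun ε α k := by
  rw [hFun, if_pos hle, three_quarters_le_div_add_div_mul_iff (by positivity)]
  have hcubic : α ^ 2 * ((2 + ε) * k - ε) ≤ ε * (k ^ 3 + k ^ 2) := by
    nlinarith [mul_sub_le_mul_sq_of_discrim_nonpos hε (sq_nonneg α) hα (k := k),
      mul_pos hε (pow_pos hk 3)]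
  have hgap : k ^ 2 + 4 * α ^ 2 * (((1 + ε) / (1 + k) - (1 - ε)) / (2 * ε)) - 3 * α ^ 2 =
      (ε * (k ^ 3 + k ^ 2) - α ^ 2 * ((2 + ε) * k - ε)) / (ε * (1 + k)) := by
    field_simp
    ring
  have : 0 ≤ (ε * (k ^ 3 + k ^ 2) - α ^ 2 * ((2 + ε) * k - ε)) / (ε * (1 + k)) :=
    div_nonneg (by linarith) (by positivity)
  linarith

lemma three_quarters_le_hFun_of_lt (hε : ε ∈ Set.Ioo (0 : ℝ) 1) (hk : 0 < k)
    (hα : α ^ 2 * (2 + ε) ^ 2 ≤ 4 * ε ^ 2) (hlt : 2 * ε / (1 - ε) < k) :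
    3 / 4 ≤ hFun ε α k := by
  obtain ⟨h0, h1⟩ := hε
  rw [hFun, if_neg hlt.not_ge, mul_zero, add_zero, le_div_iff₀ (by positivity)]
  have hk' : 2 * ε < k * (1 - ε) := by rwa [div_lt_iff₀ (by linarith)] at hlt
  have hsq : 4 * ε ^ 2 < k ^ 2 * (1 - ε) ^ 2 := by nlinarith
  -- `(2+ε)² ≥ 3(1-ε)²` on `[0,1]` turns `α²(2+ε)² ≤ 4ε²` into `3α² ≤ 4ε²/(1-ε)²`
  have hcmp : α ^ 2 * (3 * (1 - ε) ^ 2) ≤ α ^ 2 * (2 + ε) ^ 2 :=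
    mul_le_mul_of_nonneg_left (by nlinarith) (sq_nonneg α)
  have : 3 * α ^ 2 < k ^ 2 :=
    lt_of_mul_lt_mul_right (by linarith) (sq_nonneg (1 - ε))
  linarith

end hFun

/-- For `ε ∈ (0,1)` and `α = ε·√((1−ε)²(1+ε−ε²)/(1+ε)) = ε/√f(ε)`,
one has `h(k₂) ≥ 3/4` for all `k₂ > 0`. -/
theorem hFun_ge_three_quarters (ε α : ℝ) (hε : ε ∈ Set.Ioo (0 : ℝ) 1)
    (hα : α = ε * Real.sqrt ((1 - ε) ^ 2 * (1 + ε - ε ^ 2) / (1 + ε)))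
    (k₂ : ℝ) (hk : 0 < k₂) :
    3 / 4 ≤ hFun ε α k₂ := by
  have hα' := sq_mul_two_add_sq_le hε hα
  rcases le_or_gt k₂ (2 * ε / (1 - ε)) with hle | hlt
  · exact three_quarters_le_hFun_of_le hε.1 hk hα' hle
  · exact three_quarters_le_hFun_of_lt hε hk hα' hlt
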